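/- arXiv:1707.05641 — 3 statements merged into one kernel-verified Lean document; each statement's English description precedes it below -/
import Mathlib

section
/- Let ρ be a density matrix on ℂ^d and let P be a d×d complex matrix that is an orthogonal projection (P = P† = P²). Then the trace norm of (I − P)·ρ·P satisfies ‖(I − P) ρ P‖₁ ≤ √(Tr((I − P) ρ)). -/
open Matrix
open scoped ComplexOrder

/-- The trace norm `‖A‖₁ = Tr √(Aᴴ A)` of a complex matrix. -/
noncomputable def traceNorm {n : Type*} [Fintype n] [DecidableEq n]
    (A : Matrix n n ℂ) : ℝ :=
  ((Matrix.posSemidef_conjTranspose_mul_self A).1.eigenvectorUnitary.1 *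
    diagonal (((↑) : ℝ → ℂ) ∘ (√·) ∘ (Matrix.posSemidef_conjTranspose_mul_self A).1.eigenvalues) *
    (star (Matrix.posSemidef_conjTranspose_mul_self A).1.eigenvectorUnitary :
      Matrix n n ℂ)).trace.re

/-!
Write `ρ = R * R` with `R = √ρ`, so that `(1 - P) ρ P = B C` with `B = (1 - P) R`, `C = R P`.
The trace norm obeys the Hölder-type bound `‖B C‖₁ ≤ ‖B‖₂ ‖C‖₂`: if `vᵢ` are right singular
vectors of `A = B C` and `uᵢ = A vᵢ / ‖A vᵢ‖`, then `σᵢ = ⟪uᵢ, A vᵢ⟫ = ⟪Bᴴ uᵢ, C vᵢ⟫`, and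
Cauchy–Schwarz followed by Bessel's inequality for the orthonormal families `uᵢ` and `vᵢ`
bounds `∑ σᵢ`. Finally `‖B‖₂² = Tr((1 - P) ρ)` and `‖C‖₂² = Tr(P ρ) ≤ Tr ρ = 1`.
-/

open scoped InnerProductSpace

lemma IsIdempotentElem.trace_mul_mul_self {n R : Type*} [Fintype n] [CommSemiring R]
    {P : Matrix n n R} (hP : IsIdempotentElem P) (A : Matrix n n R) :
    (P * A * P).trace = (P * A).trace := by
  rw [Matrix.trace_mul_cycle, hP.eq]

section InnerProductSpace

variable {𝕜 E F ι : Type*} [RCLike 𝕜] [NormedAddCommGroup E] [InnerProductSpace 𝕜 E]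
  [NormedAddCommGroup F] [InnerProductSpace 𝕜 F]

lemma re_inner_inv_norm_smul_self (x : E) : RCLike.re ⟪(‖x‖⁻¹ : 𝕜) • x, x⟫_𝕜 = ‖x‖ := by
  rw [inner_smul_left, inner_self_eq_norm_sq_to_K, map_inv₀, RCLike.conj_ofReal,
    ← RCLike.ofReal_pow, ← RCLike.ofReal_inv, ← RCLike.ofReal_mul, RCLike.ofReal_re, sq,
    ← mul_assoc, inv_mul_mul_self]

lemma LinearMap.norm_apply_le_norm_adjoint_mul_norm [FiniteDimensional 𝕜 E]
    [FiniteDimensional 𝕜 F] (T : E →ₗ[𝕜] F) (y : E) :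
    ‖T y‖ ≤ ‖T.adjoint ((‖T y‖⁻¹ : 𝕜) • T y)‖ * ‖y‖ :=
  calc ‖T y‖ = RCLike.re ⟪T.adjoint ((‖T y‖⁻¹ : 𝕜) • T y), y⟫_𝕜 := by
        rw [LinearMap.adjoint_inner_left, re_inner_inv_norm_smul_self]
    _ ≤ ‖⟪T.adjoint ((‖T y‖⁻¹ : 𝕜) • T y), y⟫_𝕜‖ := RCLike.re_le_norm _
    _ ≤ _ := norm_inner_le_norm _ _

lemma sum_norm_sq_inner_inv_norm_smul_le [Fintype ι] {v : ι → E}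
    (hv : Pairwise fun i j => ⟪v i, v j⟫_𝕜 = 0) (x : E) :
    ∑ i, ‖⟪(‖v i‖⁻¹ : 𝕜) • v i, x⟫_𝕜‖ ^ 2 ≤ ‖x‖ ^ 2 := by
  classical
  have hon : Orthonormal 𝕜 fun i : {i // v i ≠ 0} => (‖v i‖⁻¹ : 𝕜) • v i := by
    refine ⟨fun i => norm_smul_inv_norm i.2, fun i j hij => ?_⟩
    simp [inner_smul_left, inner_smul_right, hv (Subtype.coe_ne_coe.mpr hij)]
  calc _ = ∑ i : {i // v i ≠ 0}, ‖⟪(‖v i‖⁻¹ : 𝕜) • v i, x⟫_𝕜‖ ^ 2 := by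
        refine (Finset.sum_filter_of_ne (p := fun i => v i ≠ 0) fun i _ h => ?_).symm.trans
          (Finset.sum_subtype _ (by simp) _)
        intro hvi
        simp [hvi] at h
    _ ≤ ‖x‖ ^ 2 := hon.sum_inner_products_le x

end InnerProductSpace

namespace Matrix

section HilbertSchmidt

variable {𝕜 m n ι : Type*} [RCLike 𝕜] [Fintype m] [Fintype n] [Fintype ι]

lemma re_trace_conjTranspose_mul_self (M : Matrix m n 𝕜) :
    RCLike.re (Mᴴ * M).trace = ∑ i, ∑ j, ‖M i j‖ ^ 2 := by
  simp only [trace, diag, mul_apply, conjTranspose_apply, map_sum, RCLike.star_def,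
    RCLike.conj_mul]
  rw [Finset.sum_comm]
  norm_cast

omit [Fintype m] in
lemma toEuclideanLin_apply_eq_inner [DecidableEq n] (M : Matrix m n 𝕜)
    (x : EuclideanSpace 𝕜 n) (i : m) :
    toEuclideanLin M x i = ⟪WithLp.toLp 2 (star (M i)), x⟫_𝕜 := by
  simp [PiLp.inner_apply, mulVec, dotProduct, mul_comm]

/- Only Bessel's inequality is assumed of `w`, so that normalizations `‖vᵢ‖⁻¹ • vᵢ` of
orthogonal families are covered even when some `vᵢ = 0` (and then `‖vᵢ‖⁻¹ • vᵢ = 0`). -/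
lemma sum_norm_sq_toEuclideanLin_le [DecidableEq n] (M : Matrix m n 𝕜)
    {w : ι → EuclideanSpace 𝕜 n} (hw : ∀ x, ∑ i, ‖⟪w i, x⟫_𝕜‖ ^ 2 ≤ ‖x‖ ^ 2) :
    ∑ i, ‖toEuclideanLin M (w i)‖ ^ 2 ≤ RCLike.re (Mᴴ * M).trace :=
  calc ∑ i, ‖toEuclideanLin M (w i)‖ ^ 2
      = ∑ k, ∑ i, ‖⟪w i, WithLp.toLp 2 (star (M k))⟫_𝕜‖ ^ 2 := by
        simp_rw [EuclideanSpace.norm_sq_eq, toEuclideanLin_apply_eq_inner, norm_inner_symm]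
        exact Finset.sum_comm
    _ ≤ ∑ k, ‖(WithLp.toLp 2 (star (M k)) : EuclideanSpace 𝕜 n)‖ ^ 2 :=
        Finset.sum_le_sum fun k _ => hw _
    _ = RCLike.re (Mᴴ * M).trace := by
        simp [re_trace_conjTranspose_mul_self, EuclideanSpace.norm_sq_eq]

end HilbertSchmidt

variable {n : Type*} [Fintype n] [DecidableEq n]

noncomputable def rightSingularVectors (A : Matrix n n ℂ) :
    OrthonormalBasis n ℂ (EuclideanSpace ℂ n) :=
  (posSemidef_conjTranspose_mul_self A).1.eigenvectorBasis

lemma inner_toEuclideanLin_rightSingularVectors (A : Matrix n n ℂ) (i j : n) :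
    ⟪toEuclideanLin A (A.rightSingularVectors i),
        toEuclideanLin A (A.rightSingularVectors j)⟫_ℂ =
      if i = j then ((posSemidef_conjTranspose_mul_self A).1.eigenvalues i : ℂ) else 0 := by
  have hA := (posSemidef_conjTranspose_mul_self A).1
  have hv : toEuclideanLin (Aᴴ * A) (A.rightSingularVectors j) =
      (hA.eigenvalues j : ℂ) • A.rightSingularVectors j := by
    ext k
    simpa [rightSingularVectors] using congrFun (hA.mulVec_eigenvectorBasis j) k
  rw [← LinearMap.adjoint_inner_right, ← toEuclideanLin_conjTranspose_eq_adjoint,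
    ← LinearMap.comp_apply, ← toLpLin_mul_same, hv, inner_smul_right,
    OrthonormalBasis.inner_eq_ite]
  split_ifs with hij
  · rw [hij, mul_one]
  · rw [mul_zero]

lemma traceNorm_eq_sum_norm_toEuclideanLin_rightSingularVectors (A : Matrix n n ℂ) :
    traceNorm A = ∑ i, ‖toEuclideanLin A (A.rightSingularVectors i)‖ := by
  have hA := (posSemidef_conjTranspose_mul_self A).1
  have hsum : traceNorm A = ∑ i, √(hA.eigenvalues i) := by
    rw [traceNorm, trace_mul_cycle, Unitary.coe_star_mul_self, one_mul, trace_diagonal,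
      Complex.re_sum]
    simp
  rw [hsum]
  refine Finset.sum_congr rfl fun i _ => ?_
  rw [norm_eq_sqrt_re_inner (𝕜 := ℂ), inner_toEuclideanLin_rightSingularVectors, if_pos rfl]
  simp

theorem traceNorm_mul_le (B C : Matrix n n ℂ) :
    traceNorm (B * C) ≤ √(B * Bᴴ).trace.re * √(Cᴴ * C).trace.re := by
  set v := (B * C).rightSingularVectors
  set x := fun i => toEuclideanLin (B * C) (v i)
  have hx : Pairwise fun i j => ⟪x i, x j⟫_ℂ = 0 := fun i j hij =>
    (inner_toEuclideanLin_rightSingularVectors _ i j).trans (if_neg hij)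
  set u := fun i => toEuclideanLin Bᴴ ((‖x i‖⁻¹ : ℂ) • x i)
  have hxu : ∀ i, ‖x i‖ ≤ ‖u i‖ * ‖toEuclideanLin C (v i)‖ := fun i => by
    simpa [x, u, toEuclideanLin_conjTranspose_eq_adjoint] using
      (toEuclideanLin B).norm_apply_le_norm_adjoint_mul_norm (toEuclideanLin C (v i))
  calc traceNorm (B * C) = ∑ i, ‖x i‖ :=
        traceNorm_eq_sum_norm_toEuclideanLin_rightSingularVectors _
    _ ≤ ∑ i, ‖u i‖ * ‖toEuclideanLin C (v i)‖ := Finset.sum_le_sum fun i _ => hxu i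
    _ ≤ √(∑ i, ‖u i‖ ^ 2) * √(∑ i, ‖toEuclideanLin C (v i)‖ ^ 2) :=
        Real.sum_mul_le_sqrt_mul_sqrt _ _ _
    _ ≤ √(B * Bᴴ).trace.re * √(Cᴴ * C).trace.re := by
        gcongr
        · have hu := Bᴴ.sum_norm_sq_toEuclideanLin_le (sum_norm_sq_inner_inv_norm_smul_le hx)
          rwa [conjTranspose_conjTranspose] at hu
        · exact C.sum_norm_sq_toEuclideanLin_le v.orthonormal.sum_inner_products_le

open scoped MatrixOrder in
theorem traceNorm_mul_mul_le_of_posSemidef {ρ : Matrix n n ℂ} (hρ : ρ.PosSemidef)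
    (X Y : Matrix n n ℂ) :
    traceNorm (X * ρ * Y) ≤ √(X * ρ * Xᴴ).trace.re * √(Yᴴ * ρ * Y).trace.re := by
  have hR : (CFC.sqrt ρ)ᴴ = CFC.sqrt ρ := (CFC.sqrt_nonneg ρ).posSemidef.1
  rw [← CFC.sqrt_mul_sqrt_self ρ hρ.nonneg]
  simpa only [conjTranspose_mul, hR, Matrix.mul_assoc] using
    traceNorm_mul_le (X * CFC.sqrt ρ) (CFC.sqrt ρ * Y)

end Matrix

/-- For a density matrix `ρ` and an orthogonal projection `P` on `ℂ^d`,
`‖(I − P) ρ P‖₁ ≤ √(Tr((I − P) ρ))`. -/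
theorem traceNorm_compl_proj_mul_density_mul_proj_le {d : ℕ}
    (ρ P : Matrix (Fin d) (Fin d) ℂ)
    (hρ : ρ.PosSemidef) (hρ_tr : ρ.trace = 1)
    (hP_herm : Pᴴ = P) (hP_idem : P * P = P) :
    traceNorm ((1 - P) * ρ * P) ≤ Real.sqrt (((1 - P) * ρ).trace.re) := by
  have hQ : IsIdempotentElem (1 - P) := IsIdempotentElem.one_sub hP_idem
  have hQ_herm : (1 - P)ᴴ = 1 - P := by rw [conjTranspose_sub, conjTranspose_one, hP_herm]
  have hQρ : 0 ≤ ((1 - P) * ρ).trace.re := by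
    have h := (hρ.mul_mul_conjTranspose_same (1 - P)).trace_nonneg
    rw [hQ_herm, hQ.trace_mul_mul_self] at h
    exact (Complex.nonneg_iff.mp h).1
  have hPρ : (P * ρ).trace.re ≤ 1 := by
    have h : ((1 - P) * ρ).trace + (P * ρ).trace = 1 := by
      rw [sub_mul, one_mul, trace_sub, hρ_tr, sub_add_cancel]
    have h_re := congrArg Complex.re h
    simp only [Complex.add_re, Complex.one_re] at h_re
    linarith
  calc traceNorm ((1 - P) * ρ * P)
      ≤ √((1 - P) * ρ * (1 - P)ᴴ).trace.re * √(Pᴴ * ρ * P).trace.re :=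
        traceNorm_mul_mul_le_of_posSemidef hρ _ _
    _ = √((1 - P) * ρ).trace.re * √(P * ρ).trace.re := by
        rw [hQ_herm, hP_herm, hQ.trace_mul_mul_self, IsIdempotentElem.trace_mul_mul_self hP_idem]
    _ ≤ √((1 - P) * ρ).trace.re :=
        mul_le_of_le_one_right (Real.sqrt_nonneg _) (Real.sqrt_le_one.mpr hPρ)
end

section
/- Let H be a d×d Hermitian complex matrix with eigenvalues E₀ ≤ E₁ ≤ … ≤ E_{d−1} (listed with multiplicity) and corresponding orthonormal eigenbasis τ₀, …, τ_{d−1}, and for m < d let P_m = Σ_{k<m} τ_k τ_k† be the orthogonal projection onto the span of the first m eigenvectors. If ρ is a density matrix on ℂ^d with Tr(Hρ) ≤ E, and E₀ < E_m, then Tr((I − P_m)ρ) ≤ (E − E₀)/(E_m − E₀). -/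
/-!
In the eigenbasis, `p k = ⟨τ k, ρ τ k⟩` is a probability distribution on the levels: `Tr(Hρ)` is
the mean of `E` under `p` and `Tr((I - P_m)ρ)` is the mass of `{k | m ≤ k}`, on which
`E k - E₀ ≥ E m - E₀`. Markov's inequality for the nonnegative function `E - E₀` gives the bound.
-/

open Matrix
open scoped ComplexOrder

theorem Finset.sum_le_div_of_sum_mul_le {ι : Type*} [Fintype ι] {p E : ι → ℝ} {s : Finset ι}
    {e₀ c Ē : ℝ} (hp : ∀ k, 0 ≤ p k) (hp_sum : ∑ k, p k = 1) (hE₀ : ∀ k, e₀ ≤ E k)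
    (hc : ∀ k ∈ s, c ≤ E k) (hgap : e₀ < c) (hmean : ∑ k, E k * p k ≤ Ē) :
    ∑ k ∈ s, p k ≤ (Ē - e₀) / (c - e₀) := by
  rw [le_div_iff₀ (sub_pos.2 hgap), Finset.sum_mul]
  calc ∑ k ∈ s, p k * (c - e₀)
      ≤ ∑ k ∈ s, (E k - e₀) * p k :=
        Finset.sum_le_sum fun k hk => by
          rw [mul_comm]; exact mul_le_mul_of_nonneg_right (sub_le_sub_right (hc k hk) e₀) (hp k)
    _ ≤ ∑ k, (E k - e₀) * p k :=
        Finset.sum_le_sum_of_subset_of_nonneg (Finset.subset_univ s) fun k _ _ =>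
          mul_nonneg (sub_nonneg.2 (hE₀ k)) (hp k)
    _ = ∑ k, E k * p k - e₀ := by
      simp only [sub_mul, Finset.sum_sub_distrib, ← Finset.mul_sum, hp_sum, mul_one]
    _ ≤ Ē - e₀ := by linarith

namespace Matrix

variable {n R : Type*} [Fintype n]

theorem trace_vecMulVec_mul [CommSemiring R] (v w : n → R) (A : Matrix n n R) :
    (vecMulVec v w * A).trace = w ⬝ᵥ (A *ᵥ v) := by
  rw [vecMulVec_mul, trace_vecMulVec, dotProduct_comm, dotProduct_mulVec]

/-- The rows `star (τ k)` form a left inverse of the matrix with columns `τ k`, hence also a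
right inverse. -/
theorem sum_vecMulVec_star_eq_one [DecidableEq n] [CommRing R] [Star R] (τ : n → n → R)
    (hτ : ∀ i j, star (τ i) ⬝ᵥ τ j = if i = j then 1 else 0) :
    ∑ k, vecMulVec (τ k) (star (τ k)) = 1 := by
  have h : (of fun k => star (τ k)) * (of τ)ᵀ = 1 := by
    ext i j
    rw [mul_apply', one_apply]
    exact hτ i j
  rw [← mul_eq_one_comm.mp h]
  ext i j
  simp [mul_apply, sum_apply, vecMulVec_apply]

end Matrix

/-- Let `H = Σ_k E_k |τ_k⟩⟨τ_k|` be a Hermitian matrix with nondecreasing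
eigenvalues `E` and orthonormal eigenbasis `τ`, and let `P_m` be the projection
onto the span of the first `m` eigenvectors.  If `ρ` is a density matrix with
`Tr(Hρ) ≤ E`, then `Tr((I − P_m)ρ) ≤ (E − E₀)/(E_m − E₀)`. -/
theorem trace_compl_spectral_proj_le {d : ℕ}
    (E : Fin d → ℝ) (hE_mono : Monotone E)
    (τ : Fin d → (Fin d → ℂ))
    (hτ_on : ∀ i j : Fin d, star (τ i) ⬝ᵥ τ j = if i = j then 1 else 0)
    (H : Matrix (Fin d) (Fin d) ℂ)
    (hH : H = ∑ k : Fin d, (E k : ℂ) • vecMulVec (τ k) (star (τ k)))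
    (m : Fin d)
    (Pm : Matrix (Fin d) (Fin d) ℂ)
    (hPm : Pm = ∑ k ∈ Finset.Iio m, vecMulVec (τ k) (star (τ k)))
    (ρ : Matrix (Fin d) (Fin d) ℂ)
    (hρ : ρ.PosSemidef) (hρ_tr : ρ.trace = 1)
    (Elevel : ℝ) (hEρ : (H * ρ).trace.re ≤ Elevel)
    (hgap : E ⟨0, m.pos⟩ < E m) :
    ((1 - Pm) * ρ).trace.re ≤ (Elevel - E ⟨0, m.pos⟩) / (E m - E ⟨0, m.pos⟩) := by
  set p : Fin d → ℝ := fun k => (star (τ k) ⬝ᵥ (ρ *ᵥ τ k)).re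
  have re_trace_proj_mul (s : Finset (Fin d)) :
      ((∑ k ∈ s, vecMulVec (τ k) (star (τ k))) * ρ).trace.re = ∑ k ∈ s, p k := by
    simp only [Finset.sum_mul, trace_sum, trace_vecMulVec_mul, Complex.re_sum, p]
  have hp_nonneg (k : Fin d) : 0 ≤ p k :=
    (Complex.nonneg_iff.mp (hρ.dotProduct_mulVec_nonneg (τ k))).1
  have hp_sum : ∑ k, p k = 1 := by
    rw [← re_trace_proj_mul, sum_vecMulVec_star_eq_one τ hτ_on, one_mul, hρ_tr, Complex.one_re]
  have hmean : ∑ k, E k * p k ≤ Elevel := by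
    simpa [hH, Finset.sum_mul, trace_sum, smul_mul_assoc, trace_vecMulVec_mul, Complex.re_sum, p]
      using hEρ
  have hcompl : ((1 - Pm) * ρ).trace.re = ∑ k ∈ (Finset.Iio m)ᶜ, p k := by
    rw [← sum_vecMulVec_star_eq_one τ hτ_on, hPm, ← Finset.sum_compl_add_sum (Finset.Iio m),
      add_sub_cancel_right, re_trace_proj_mul]
  rw [hcompl]
  refine Finset.sum_le_div_of_sum_mul_le hp_nonneg hp_sum (fun k => hE_mono (Nat.zero_le k))
    (fun k hk => hE_mono ?_) hgap hmean
  simpa using hk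
end

section
/- Let f : ℝ → ℝ be nonnegative and concave on [0, ∞). Then the function x ↦ x^{1/4}·f(√x) is concave on [0, ∞). -/
/-!
For `0 ≤ a < b`, a nonnegative concave `f` dominates on `[√a, √b]` its chord `y ↦ m * y + k`, and
`m, k ≥ 0`: a concave function bounded below on `[0, ∞)` is nondecreasing, and the chord line lies
above `f` at `0`, where `f 0 ≥ 0`. Hence `x ^ (1/4) * f (√x)` lies above
`x ^ (1/4) * (m * √x + k) = m * x ^ (3/4) + k * x ^ (1/4)` between `a` and `b`, with equality at the
endpoints, and the latter is concave.
-/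

open Set

lemma add_slope_mul_sub {𝕜 : Type*} [Field 𝕜] (f : 𝕜 → 𝕜) (x z : 𝕜) :
    f x + slope f x z * (z - x) = f z := by
  rw [mul_comm, ← smul_eq_mul, sub_smul_slope, vsub_eq_sub, add_sub_cancel]

section Chord

variable {𝕜 : Type*} [Field 𝕜] [LinearOrder 𝕜] [IsStrictOrderedRing 𝕜] {s : Set 𝕜}
  {f : 𝕜 → 𝕜} {x y z : 𝕜}

lemma ConcaveOn.add_slope_mul_sub_le (hf : ConcaveOn 𝕜 s f) (hx : x ∈ s) (hz : z ∈ s)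
    (hxy : x ≤ y) (hyz : y ≤ z) : f x + slope f x z * (y - x) ≤ f y := by
  rcases hxy.eq_or_lt with rfl | hxy
  · simp
  have hy : y ∈ s := hf.1.ordConnected.out hx hz ⟨hxy.le, hyz⟩
  have hslope : slope f x z ≤ slope f x y :=
    hf.antitoneOn_slope_gt hx ⟨hy, hxy⟩ ⟨hz, hxy.trans_le hyz⟩ hyz
  calc f x + slope f x z * (y - x) ≤ f x + slope f x y * (y - x) := by gcongr
    _ = f y := add_slope_mul_sub f x y

lemma ConcaveOn.le_add_slope_mul_sub (hf : ConcaveOn 𝕜 s f) (hx : x ∈ s) (hz : z ∈ s) (hy : y ∈ s)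
    (hxz : x < z) (hyxz : y ∉ Ioo x z) : f y ≤ f x + slope f x z * (y - x) := by
  rcases lt_trichotomy y x with hyx | rfl | hxy
  · have hslope : slope f x z ≤ slope f x y :=
      hf.slope_anti hx ⟨hy, hyx.ne⟩ ⟨hz, hxz.ne'⟩ (hyx.trans hxz).le
    calc f y = f x + slope f x y * (y - x) := (add_slope_mul_sub f x y).symm
      _ ≤ f x + slope f x z * (y - x) := by
        linarith [mul_le_mul_of_nonpos_right hslope (sub_nonpos.2 hyx.le)]
  · simp
  · have hzy : z ≤ y := not_lt.1 fun hyz ↦ hyxz ⟨hxy, hyz⟩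
    have hslope : slope f x y ≤ slope f x z :=
      hf.slope_anti hx ⟨hz, hxz.ne'⟩ ⟨hy, hxy.ne'⟩ hzy
    calc f y = f x + slope f x y * (y - x) := (add_slope_mul_sub f x y).symm
      _ ≤ f x + slope f x z * (y - x) := by gcongr

lemma ConcaveOn.monotoneOn_of_bddBelow {a : 𝕜} (hf : ConcaveOn 𝕜 (Ici a) f)
    (hb : BddBelow (f '' Ici a)) : MonotoneOn f (Ici a) := by
  intro x hx z hz hxz
  rcases hxz.eq_or_lt with rfl | hxz
  · rfl
  obtain ⟨M, hM⟩ := hb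
  by_contra! hzx
  have hm : slope f x z < 0 := by
    rw [slope_def_field]; exact div_neg_of_neg_of_pos (sub_neg.2 hzx) (sub_pos.2 hxz)
  -- Far to the right the chord line, which dominates `f`, drops below `M`.
  set y := max z (x + (f x - M + 1) / -slope f x z)
  have hy : y ∈ Ici a := le_trans hz (le_max_left _ _)
  have hyx : (f x - M + 1) / -slope f x z ≤ y - x := le_sub_iff_add_le'.2 (le_max_right _ _)
  have hline : f x + slope f x z * (y - x) ≤ M - 1 := by
    have := mul_le_mul_of_nonpos_left hyx hm.le
    rw [mul_div_assoc', div_neg, mul_div_cancel_left₀ _ hm.ne] at this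
    linarith
  have := hf.le_add_slope_mul_sub hx hz hy hxz fun h ↦ (h.2.trans_le (le_max_left _ _)).false
  linarith [hM (mem_image_of_mem f hy)]

end Chord

lemma concaveOn_rpow_mul_affine_rpow {p q m k : ℝ} (hp : 0 ≤ p) (hq : 0 < q) (hpq : p + q ≤ 1)
    (hm : 0 ≤ m) (hk : 0 ≤ k) : ConcaveOn ℝ (Ici 0) fun x ↦ x ^ p * (m * x ^ q + k) := by
  refine (((Real.concaveOn_rpow (by linarith) hpq).smul hm).add
    ((Real.concaveOn_rpow hp (by linarith)).smul hk)).congr fun x (hx : 0 ≤ x) ↦ ?_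
  simp only [Pi.add_apply, smul_eq_mul, Real.rpow_add' hx (by linarith : p + q ≠ 0)]
  ring

theorem ConcaveOn.rpow_mul_comp_rpow {f : ℝ → ℝ} {p q : ℝ} (hf : ConcaveOn ℝ (Ici 0) f)
    (hf₀ : ∀ x ∈ Ici 0, 0 ≤ f x) (hp : 0 ≤ p) (hq : 0 < q) (hpq : p + q ≤ 1) :
    ConcaveOn ℝ (Ici 0) fun x ↦ x ^ p * f (x ^ q) := by
  refine LinearOrder.concaveOn_of_lt (convex_Ici 0) ?_
  rintro a (ha : 0 ≤ a) b (hb : 0 ≤ b) hab t u ht hu htu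
  set c := t • a + u • b
  have hac : a < c := by simp only [c, smul_eq_mul]; nlinarith
  have hcb : c < b := by simp only [c, smul_eq_mul]; nlinarith
  have hA : a ^ q ∈ Ici 0 := Real.rpow_nonneg ha q
  have hB : b ^ q ∈ Ici 0 := Real.rpow_nonneg hb q
  have hAB : a ^ q < b ^ q := Real.rpow_lt_rpow ha hab hq
  set m := slope f (a ^ q) (b ^ q)
  set k := f (a ^ q) - m * a ^ q
  have hline : ∀ y, m * y + k = f (a ^ q) + m * (y - a ^ q) := fun y ↦ by ring
  have hm : 0 ≤ m := by
    refine (hf.monotoneOn_of_bddBelow ⟨0, ?_⟩).slope_nonneg hA hB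
    rintro _ ⟨x, hx, rfl⟩
    exact hf₀ x hx
  have hk : 0 ≤ k := by
    have := hf.le_add_slope_mul_sub hA hB self_mem_Ici hAB fun h ↦ (hA.trans_lt h.1).false
    linarith [hf₀ 0 self_mem_Ici]
  have hfa : f (a ^ q) = m * a ^ q + k := by ring
  have hfb : f (b ^ q) = m * b ^ q + k := by rw [hline, add_slope_mul_sub]
  have hfc : m * c ^ q + k ≤ f (c ^ q) := by
    rw [hline]
    exact hf.add_slope_mul_sub_le hA hB (Real.rpow_le_rpow ha hac.le hq.le)
      (Real.rpow_le_rpow (ha.trans hac.le) hcb.le hq.le)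
  calc t • (a ^ p * f (a ^ q)) + u • (b ^ p * f (b ^ q))
      = t • (a ^ p * (m * a ^ q + k)) + u • (b ^ p * (m * b ^ q + k)) := by rw [← hfa, ← hfb]
    _ ≤ c ^ p * (m * c ^ q + k) :=
      (concaveOn_rpow_mul_affine_rpow hp hq hpq hm hk).2 ha hb ht.le hu.le htu
    _ ≤ c ^ p * f (c ^ q) := by gcongr

/-- If `f : ℝ → ℝ` is nonnegative and concave on `[0, ∞)`, then
`x ↦ x^{1/4} · f(√x)` is concave on `[0, ∞)`. -/
theorem concave_rpow_quarter_mul_comp_sqrt (f : ℝ → ℝ)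
    (hf_nonneg : ∀ a : ℝ, 0 ≤ a → 0 ≤ f a)
    (hf_concave : ∀ a b t : ℝ, 0 ≤ a → 0 ≤ b → 0 ≤ t → t ≤ 1 →
      t * f a + (1 - t) * f b ≤ f (t * a + (1 - t) * b)) :
    ∀ a b t : ℝ, 0 ≤ a → 0 ≤ b → 0 ≤ t → t ≤ 1 →
      t * (a ^ ((1 : ℝ) / 4) * f (Real.sqrt a)) +
          (1 - t) * (b ^ ((1 : ℝ) / 4) * f (Real.sqrt b)) ≤
        (t * a + (1 - t) * b) ^ ((1 : ℝ) / 4) *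
          f (Real.sqrt (t * a + (1 - t) * b)) := by
  have hf : ConcaveOn ℝ (Ici 0) f := by
    refine ⟨convex_Ici 0, fun x hx y hy s u hs _ hsu ↦ ?_⟩
    obtain rfl : u = 1 - s := by linarith
    exact hf_concave x y s hx hy hs (by linarith)
  have hg := hf.rpow_mul_comp_rpow hf_nonneg (p := 1 / 4) (q := 1 / 2) (by norm_num) (by norm_num)
    (by norm_num)
  intro a b t ha hb ht ht₁
  simpa only [smul_eq_mul, Real.sqrt_eq_rpow] using hg.2 ha hb ht (sub_nonneg.2 ht₁) (by ring)
end
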